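/- For every n ≥ 1, the sets T^point_n and T'^point_n are (n,𝔾)-equivalent, where the witnessing trace equivalence is ≈_𝔾 (two traces are related iff they have the same set of occurring valuations). -/

import Mathlib

/-- The alphabet `{x, y}`. -/
inductive XY : Type where
  | x : XY
  | y : XY
deriving DecidableEq

/-- The valuation with `x ↦ b₁`, `y ↦ b₂`. -/
def vXY (b₁ b₂ : Bool) : XY → Bool
  | .x => b₁
  | .y => b₂

/-- The trace that carries the valuation `v` on positions `start ≤ i < start + len`
and the all-false valuation `00` elsewhere. -/
def blockTr (v : XY → Bool) (start len : ℕ) : ℕ → XY → Bool :=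
  fun i => if start ≤ i ∧ i < start + len then v else fun _ => false

/-- `E_n = {(11)^{n+2}(00)^ω} ∪ ⋃_{0≤j<n} {(00)^j 10 (00)^ω, (00)^j 01 (00)^ω}`. -/
def En (n : ℕ) : Set (ℕ → XY → Bool) :=
  {τ | τ = blockTr (vXY true true) 0 (n + 2) ∨
       ∃ j, j < n ∧ (τ = blockTr (vXY true false) j 1 ∨ τ = blockTr (vXY false true) j 1)}

/-- `T^point_n = E_n ∪ {(00)^n 10 10 (00)^ω, (00)^n 01 01 (00)^ω}`. -/
def Tpoint (n : ℕ) : Set (ℕ → XY → Bool) :=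
  En n ∪ {blockTr (vXY true false) n 2, blockTr (vXY false true) n 2}

/-- `T'^point_n = E_n ∪ {(00)^n 10 00 (00)^ω, (00)^n 01 00 (00)^ω}`. -/
def Tpoint' (n : ℕ) : Set (ℕ → XY → Bool) :=
  En n ∪ {blockTr (vXY true false) n 1, blockTr (vXY false true) n 1}

/-- Flattening of a trace assignment: an infinite trace over the alphabet `X × ℕ`
(`false` on pairs `(a, π)` with `π` outside the domain of the assignment). -/
def flat {X : Type} {T : Set (ℕ → X → Bool)} (Θ : ℕ → Option ↥T) : ℕ → (X × ℕ) → Bool :=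
  fun i p => ((Θ p.2).map (fun τ => τ.1 i p.1)).getD false

/-- The domain of the assignment consists of exactly `k` trace variables. -/
def HasDomCard {X : Type} {T : Set (ℕ → X → Bool)} (Θ : ℕ → Option ↥T) (k : ℕ) : Prop :=
  ∃ s : Finset ℕ, (∀ π, (Θ π).isSome ↔ π ∈ s) ∧ s.card = k

/-- Composition `f ∘ Θ` of a bijection `f : T → T'` with an assignment over `T`. -/
def mapAssign {X : Type} {T T' : Set (ℕ → X → Bool)} (f : ↥T ≃ ↥T') (Θ : ℕ → Option ↥T) :
    ℕ → Option ↥T' := fun π => (Θ π).map f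

/-!
The bijection shortens the doubled point `(00)^n 10 10` to `(00)^n 10 00` (and likewise for `01`)
and fixes `E_n`, so a flattened assignment changes only at position `n + 1`. The old valuation at
`n + 1` reappears at position `n` of the new trace. Conversely, the new valuation at `n + 1` is
`11` on the variables carrying `(11)^{n+2}` and `00` elsewhere. If no variable carries
`(11)^{n+2}` it is the all-`00` valuation found at position `n + 2`; otherwise the remaining
`n - 1` variables carry single points at fewer than `n` positions, and at any position `j < n`
left free the old trace shows exactly this valuation.
-/

open Function

lemma Set.range_eq_range_of_eq_off {ι α : Type*} {f g : ι → α} {m : ι} (h : ∀ i ≠ m, f i = g i)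
    (hf : f m ∈ Set.range g) (hg : g m ∈ Set.range f) : Set.range f = Set.range g := by
  refine subset_antisymm ?_ ?_ <;> rintro _ ⟨i, rfl⟩ <;> by_cases hi : i = m
  · exact hi ▸ hf
  · exact ⟨i, (h i hi).symm⟩
  · exact hi ▸ hg
  · exact ⟨i, h i hi⟩

lemma exists_lt_forall_not_of_card_lt {α : Type*} {t : Finset α} {n : ℕ} (ht : t.card < n)
    (P : α → ℕ → Prop) (hmem : ∀ a j, j < n → P a j → a ∈ t)
    (huniq : ∀ a j j', P a j → P a j' → j = j') : ∃ j < n, ∀ a, ¬ P a j := by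
  classical
  by_contra! hcov
  let g : α → ℕ := fun a => if h : ∃ j, P a j then h.choose else 0
  have hsurj : Set.SurjOn g t (Finset.range n) := by
    intro j hj
    obtain ⟨a, ha⟩ := hcov j (Finset.mem_range.1 hj)
    have h : ∃ j, P a j := ⟨j, ha⟩
    exact ⟨a, hmem a j (Finset.mem_range.1 hj) ha, by
      simp only [g, dif_pos h]; exact huniq a _ _ h.choose_spec ha⟩
  exact (Finset.card_range n ▸ Finset.card_le_card_of_surjOn g hsurj).not_gt ht

section Flat

variable {X : Type} {T T' : Set (ℕ → X → Bool)}

lemma flat_mapAssign_apply (f : ↥T ≃ ↥T') (Θ : ℕ → Option ↥T) {i j : ℕ}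
    (h : ∀ π τ, Θ π = some τ → (f τ).1 i = τ.1 j) : flat (mapAssign f Θ) i = flat Θ j := by
  funext p
  simp only [flat, mapAssign]
  cases hp : Θ p.2 with
  | none => rfl
  | some τ => simp [h _ _ hp]

lemma HasDomCard.mapAssign {Θ : ℕ → Option ↥T} {k : ℕ} (hΘ : HasDomCard Θ k) (f : ↥T ≃ ↥T') :
    HasDomCard (mapAssign f Θ) k := by
  obtain ⟨s, hdom, hcard⟩ := hΘ
  exact ⟨s, fun π => by simpa [_root_.mapAssign] using hdom π, hcard⟩

lemma mapAssign_mapAssign_symm (f : ↥T ≃ ↥T') (Θ : ℕ → Option ↥T') :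
    mapAssign f (mapAssign f.symm Θ) = Θ := by
  funext π
  simp [mapAssign, Option.map_map]

end Flat

section Blocks

variable {v : XY → Bool} {s l i : ℕ}

lemma blockTr_apply_of_le_of_lt (h₁ : s ≤ i) (h₂ : i < s + l) : blockTr v s l i = v :=
  if_pos ⟨h₁, h₂⟩

lemma blockTr_apply_of_lt (h : i < s) : blockTr v s l i = fun _ => false :=
  if_neg (by omega)

lemma blockTr_apply_of_le (h : s + l ≤ i) : blockTr v s l i = fun _ => false :=
  if_neg (by omega)

lemma update_blockTr_add : update (blockTr v s l) (s + l) v = blockTr v s (l + 1) := by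
  funext i
  rcases lt_trichotomy i (s + l) with h | rfl | h
  · simp only [update_of_ne h.ne, blockTr]
    split_ifs <;> first | rfl | omega
  · rw [update_self, blockTr_apply_of_le_of_lt (by omega) (by omega)]
  · rw [update_of_ne h.ne', blockTr_apply_of_le h.le, blockTr_apply_of_le h]

lemma update_blockTr_succ :
    update (blockTr v s (l + 1)) (s + l) (fun _ => false) = blockTr v s l := by
  rw [← update_blockTr_add, update_idem, update_eq_self_iff, blockTr_apply_of_le le_rfl]

end Blocks

@[simp]
lemma vXY_inj {b₁ b₂ c₁ c₂ : Bool} : vXY b₁ b₂ = vXY c₁ c₂ ↔ b₁ = c₁ ∧ b₂ = c₂ :=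
  ⟨fun h => ⟨congrFun h .x, congrFun h .y⟩, fun ⟨h₁, h₂⟩ => h₁ ▸ h₂ ▸ rfl⟩

lemma vXY_false_false : vXY false false = fun _ => false :=
  funext fun a => by cases a <;> rfl

section Point

variable {τ : ℕ → XY → Bool}

def IsPointAt (j : ℕ) (τ : ℕ → XY → Bool) : Prop :=
  τ = blockTr (vXY true false) j 1 ∨ τ = blockTr (vXY false true) j 1

lemma IsPointAt.unique {j j' : ℕ} (h : IsPointAt j τ) (h' : IsPointAt j' τ) : j = j' := by
  by_contra hne
  have hj : τ j ≠ fun _ => false := by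
    rcases h with rfl | rfl <;>
      rw [blockTr_apply_of_le_of_lt le_rfl (by omega), ← vXY_false_false] <;> simp
  rcases h' with rfl | rfl <;>
    rcases Nat.lt_or_gt_of_ne hne with hlt | hlt
  all_goals first
    | exact hj (blockTr_apply_of_le (by omega))
    | exact hj (blockTr_apply_of_lt hlt)

lemma IsPointAt.apply_of_ne {j i : ℕ} (h : IsPointAt j τ) (hi : i ≠ j) :
    τ i = fun _ => false := by
  rcases h with rfl | rfl <;> rcases Nat.lt_or_gt_of_ne hi with hlt | hlt
  all_goals first
    | exact blockTr_apply_of_lt hlt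
    | exact blockTr_apply_of_le (by omega)

end Point

lemma exists_forall_not_isPointAt {T : Set (ℕ → XY → Bool)} {n : ℕ} {Θ : ℕ → Option ↥T}
    (hΘ : HasDomCard Θ n) {π₁ : ℕ} {τ₁ : ↥T} (h₁ : Θ π₁ = some τ₁)
    (hτ₁ : ∀ j < n, ¬ IsPointAt j τ₁.1) :
    ∃ j < n, ∀ π τ, Θ π = some τ → ¬ IsPointAt j τ.1 := by
  obtain ⟨s, hdom, hcard⟩ := hΘ
  have hπ₁ : π₁ ∈ s := (hdom π₁).1 (by simp [h₁])
  have hmem : ∀ π j, j < n → (∃ τ, Θ π = some τ ∧ IsPointAt j τ.1) → π ∈ s.erase π₁ := by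
    rintro π j hj ⟨τ, hπ, hpt⟩
    refine Finset.mem_erase.2 ⟨?_, (hdom π).1 (by simp [hπ])⟩
    rintro rfl
    rw [h₁, Option.some_inj] at hπ
    exact hτ₁ j hj (hπ ▸ hpt)
  obtain ⟨j, hj, hfree⟩ := exists_lt_forall_not_of_card_lt
    ((Finset.card_erase_lt_of_mem hπ₁).trans_eq hcard) _ hmem
    fun π j j' ⟨τ, hπ, hpt⟩ ⟨τ', hπ', hpt'⟩ => by
      rw [hπ, Option.some_inj] at hπ'
      exact hpt.unique (hπ' ▸ hpt')
  exact ⟨j, hj, fun π τ hπ hpt => hfree π ⟨τ, hπ, hpt⟩⟩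

section Shorten

variable {n : ℕ} {τ σ : ℕ → XY → Bool}

open Classical in
noncomputable def shorten (n : ℕ) (τ : ℕ → XY → Bool) : ℕ → XY → Bool :=
  if τ (n + 1) = vXY true true then τ else update τ (n + 1) fun _ => false

def lengthen (n : ℕ) (σ : ℕ → XY → Bool) : ℕ → XY → Bool :=
  update σ (n + 1) (σ n)

lemma shorten_apply_of_ne {i : ℕ} (hi : i ≠ n + 1) : shorten n τ i = τ i := by
  unfold shorten; split_ifs
  · rfl
  · exact update_of_ne hi _ _

lemma Tpoint_apply_eq_apply_succ (hτ : τ ∈ Tpoint n) : τ n = τ (n + 1) := by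
  rcases hτ with (rfl | ⟨j, hj, rfl | rfl⟩) | rfl | rfl <;>
    simp only [blockTr] <;> split_ifs <;> first | rfl | omega

lemma Tpoint_apply_add_two (hτ : τ ∈ Tpoint n) : τ (n + 2) = fun _ => false := by
  rcases hτ with (rfl | ⟨j, hj, rfl | rfl⟩) | rfl | rfl <;> exact blockTr_apply_of_le (by omega)

lemma En_apply_succ (hτ : τ ∈ En n) :
    τ (n + 1) = vXY true true ∨ τ (n + 1) = fun _ => false := by
  rcases hτ with rfl | ⟨j, hj, rfl | rfl⟩
  · exact .inl (blockTr_apply_of_le_of_lt (by omega) (by omega))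
  all_goals exact .inr (blockTr_apply_of_le (by omega))

lemma shorten_eq_self_of_mem_En (hτ : τ ∈ En n) : shorten n τ = τ := by
  unfold shorten
  split_ifs with h
  · rfl
  · rw [update_eq_self_iff]
    exact (En_apply_succ hτ).resolve_left h |>.symm

lemma lengthen_eq_self_of_mem_En (hσ : σ ∈ En n) : lengthen n σ = σ := by
  rw [lengthen, update_eq_self_iff]
  rcases hσ with rfl | ⟨j, hj, rfl | rfl⟩
  · rw [blockTr_apply_of_le_of_lt (by omega) (by omega),
      blockTr_apply_of_le_of_lt (by omega) (by omega)]
  all_goals rw [blockTr_apply_of_le (by omega), blockTr_apply_of_le (by omega)]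

lemma shorten_blockTr {v : XY → Bool} (hv : v ≠ vXY true true) :
    shorten n (blockTr v n 2) = blockTr v n 1 := by
  rw [shorten, if_neg (by rwa [blockTr_apply_of_le_of_lt (by omega) (by omega)])]
  exact update_blockTr_succ

lemma lengthen_blockTr {v : XY → Bool} : lengthen n (blockTr v n 1) = blockTr v n 2 := by
  rw [lengthen, blockTr_apply_of_le_of_lt le_rfl (by omega)]
  exact update_blockTr_add

lemma shorten_mem_Tpoint' (hτ : τ ∈ Tpoint n) : shorten n τ ∈ Tpoint' n := by
  rcases hτ with hτ | rfl | rfl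
  · exact .inl (by rwa [shorten_eq_self_of_mem_En hτ])
  · exact .inr (.inl (shorten_blockTr (by simp)))
  · exact .inr (.inr (shorten_blockTr (by simp)))

lemma lengthen_mem_Tpoint (hσ : σ ∈ Tpoint' n) : lengthen n σ ∈ Tpoint n := by
  rcases hσ with hσ | rfl | rfl
  · exact .inl (by rwa [lengthen_eq_self_of_mem_En hσ])
  · exact .inr (.inl lengthen_blockTr)
  · exact .inr (.inr lengthen_blockTr)

lemma lengthen_shorten (hτ : τ ∈ Tpoint n) : lengthen n (shorten n τ) = τ := by
  rcases hτ with hτ | rfl | rfl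
  · rw [shorten_eq_self_of_mem_En hτ, lengthen_eq_self_of_mem_En hτ]
  all_goals rw [shorten_blockTr (by simp), lengthen_blockTr]

lemma shorten_lengthen (hσ : σ ∈ Tpoint' n) : shorten n (lengthen n σ) = σ := by
  rcases hσ with hσ | rfl | rfl
  · rw [lengthen_eq_self_of_mem_En hσ, shorten_eq_self_of_mem_En hσ]
  all_goals rw [lengthen_blockTr, shorten_blockTr (by simp)]

noncomputable def shortenEquiv (n : ℕ) : ↥(Tpoint n) ≃ ↥(Tpoint' n) where
  toFun τ := ⟨shorten n τ, shorten_mem_Tpoint' τ.2⟩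
  invFun σ := ⟨lengthen n σ, lengthen_mem_Tpoint σ.2⟩
  left_inv τ := Subtype.ext (lengthen_shorten τ.2)
  right_inv σ := Subtype.ext (shorten_lengthen σ.2)

lemma shorten_apply_succ_of_ne (hτ : τ (n + 1) ≠ vXY true true) :
    shorten n τ (n + 1) = fun _ => false := by
  rw [shorten, if_neg hτ, update_self]

lemma shorten_apply_succ_eq_apply {j : ℕ} (hτ : τ ∈ Tpoint n) (hj : j < n)
    (hpt : ¬ IsPointAt j τ) : shorten n τ (n + 1) = τ j := by
  rcases hτ with hτE | rfl | rfl
  · rw [shorten_eq_self_of_mem_En hτE]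
    rcases hτE with rfl | ⟨j', hj', (hpt' : IsPointAt j' τ)⟩
    · rw [blockTr_apply_of_le_of_lt (by omega) (by omega),
        blockTr_apply_of_le_of_lt (by omega) (by omega)]
    · have hne : j ≠ j' := by rintro rfl; exact hpt hpt'
      rw [hpt'.apply_of_ne (by omega), hpt'.apply_of_ne hne]
  all_goals rw [shorten_blockTr (by simp), blockTr_apply_of_le le_rfl, blockTr_apply_of_lt hj]

end Shorten

lemma flat_mapAssign_shortenEquiv_apply_succ_mem_range {n : ℕ} {Θ : ℕ → Option ↥(Tpoint n)}
    (hΘ : HasDomCard Θ n) :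
    flat (mapAssign (shortenEquiv n) Θ) (n + 1) ∈ Set.range (flat Θ) := by
  by_cases hfull : ∃ π τ, Θ π = some τ ∧ τ.1 (n + 1) = vXY true true
  · obtain ⟨π₁, τ₁, h₁, hτ₁⟩ := hfull
    obtain ⟨j, hj, hfree⟩ := exists_forall_not_isPointAt hΘ h₁ fun j hj hpt => by
      rw [hpt.apply_of_ne (by omega), ← vXY_false_false] at hτ₁
      simp at hτ₁
    exact ⟨j, (flat_mapAssign_apply _ _ fun π τ hπ =>
      shorten_apply_succ_eq_apply τ.2 hj (hfree π τ hπ)).symm⟩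
  · push Not at hfull
    exact ⟨n + 2, (flat_mapAssign_apply _ _ fun π τ hπ =>
      (shorten_apply_succ_of_ne (hfull π τ hπ)).trans (Tpoint_apply_add_two τ.2).symm).symm⟩

lemma range_flat_mapAssign_shortenEquiv {n : ℕ} {Θ : ℕ → Option ↥(Tpoint n)}
    (hΘ : HasDomCard Θ n) :
    Set.range (flat Θ) = Set.range (flat (mapAssign (shortenEquiv n) Θ)) :=
  Set.range_eq_range_of_eq_off (m := n + 1)
    (fun _ hi => (flat_mapAssign_apply _ _ fun _ _ _ => shorten_apply_of_ne hi).symm)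
    ⟨n, flat_mapAssign_apply _ _ fun _ τ _ =>
      (shorten_apply_of_ne (by omega)).trans (Tpoint_apply_eq_apply_succ τ.2)⟩
    (flat_mapAssign_shortenEquiv_apply_succ_mem_range hΘ)

theorem Tpoint_nG_equiv_Tpoint'_general (n : ℕ) :
    ∃ f : ↥(Tpoint n) ≃ ↥(Tpoint' n),
      (∀ Θ : ℕ → Option ↥(Tpoint n), HasDomCard Θ n →
        Set.range (flat Θ) = Set.range (flat (mapAssign f Θ))) ∧
      (∀ Θ' : ℕ → Option ↥(Tpoint' n), HasDomCard Θ' n →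
        Set.range (flat Θ') = Set.range (flat (mapAssign f.symm Θ'))) := by
  refine ⟨shortenEquiv n, fun Θ hΘ => range_flat_mapAssign_shortenEquiv hΘ, fun Θ' hΘ' => ?_⟩
  have h := range_flat_mapAssign_shortenEquiv (hΘ'.mapAssign (shortenEquiv n).symm)
  rw [mapAssign_mapAssign_symm] at h
  exact h.symm

/-- For every `n ≥ 1`, the sets `T^point_n` and `T'^point_n` are
`(n, 𝔾)`-equivalent, where the witnessing trace equivalence `≈_𝔾` relates two traces
iff they have the same set of occurring valuations (equal ranges). -/
theorem Tpoint_nG_equiv_Tpoint' (n : ℕ) (hn : 1 ≤ n) :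
    ∃ f : ↥(Tpoint n) ≃ ↥(Tpoint' n),
      (∀ Θ : ℕ → Option ↥(Tpoint n), HasDomCard Θ n →
        Set.range (flat Θ) = Set.range (flat (mapAssign f Θ))) ∧
      (∀ Θ' : ℕ → Option ↥(Tpoint' n), HasDomCard Θ' n →
        Set.range (flat Θ') = Set.range (flat (mapAssign f.symm Θ'))) :=
  Tpoint_nG_equiv_Tpoint'_general n
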